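/- (Main nonsingularity theorem) In the Uvarov setting with u and û = u + v both quasidefinite, if either Ker^R_β⊥-condition (Ker^R_β)^{⊥_u^R} = {0_p} or the ideal condition 𝕀^{⊥_u^L} = {0_p} holds, then for every n the matrix I_{Np} + ⟨𝒥^{[0,1]}_{K_{n−1}}(x),(β)_x⟩ ∈ ℂ^{Np×Np} is invertible. -/

import Mathlib

open Polynomial Matrix Finset

namespace Paper

abbrev Mat (p : ℕ) := Matrix (Fin p) (Fin p) ℂ
abbrev MatPoly (p : ℕ) := Matrix (Fin p) (Fin p) (Polynomial ℂ)

variable {p : ℕ}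

/-- Embed a constant matrix as a matrix polynomial. -/
noncomputable def cm (A : Mat p) : MatPoly p := A.map Polynomial.C

/-- The monomial `I_p x^k` as a matrix polynomial. -/
noncomputable def monoM (p k : ℕ) : MatPoly p := Matrix.diagonal (fun _ => (Polynomial.X : Polynomial ℂ) ^ k)

/-- The `k`-th matrix coefficient of a matrix polynomial. -/
noncomputable def coeffM (P : MatPoly p) (k : ℕ) : Mat p := Matrix.of fun i j => (P i j).coeff k

/-- Entrywise derivative of a matrix polynomial. -/
noncomputable def dM : MatPoly p → MatPoly p := fun P => Matrix.of fun i j => Polynomial.derivative (P i j)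

/-- Evaluation of a matrix polynomial at a scalar point. -/
noncomputable def evM (z : ℂ) (P : MatPoly p) : Mat p := Matrix.of fun i j => (P i j).eval z

/-- `P` is monic of exact degree `n`. -/
def MonicDeg (P : MatPoly p) (n : ℕ) : Prop :=
  coeffM P n = 1 ∧ ∀ k, n < k → coeffM P k = 0

/-- Sesquilinear form on matrix polynomials: left `ℂ^{p×p}`-linear in the first slot,
`⟨P, AQ + R⟩ = ⟨P,Q⟩Aᵀ + ⟨P,R⟩` in the second slot. -/
def IsSesq (S : MatPoly p → MatPoly p → Mat p) : Prop :=
  (∀ (A : Mat p) (P Q R : MatPoly p), S (cm A * P + Q) R = A * S P R + S Q R) ∧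
  (∀ (A : Mat p) (P Q R : MatPoly p), S P (cm A * Q + R) = S P Q * Aᵀ + S P R)

end Paper

namespace Paper

variable {p : ℕ}

/-- Jet index set: pairs (point j, derivative order m < κ j). -/
abbrev JIdx (q : ℕ) (κ : Fin q → ℕ) := Σ j : Fin q, Fin (κ j)

/-- The `a`-th `p×p` block (a jet index) of the column jet `𝒥^{[0,1]}_{K_{n-1}}(x)`:
the `y`-jet of the Christoffel–Darboux kernel `K_{n-1}(x,y)` at the point `xpt a.1`,
derivative order `a.2`, divided by `(a.2)!`; a matrix polynomial in `x`. -/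
noncomputable def KBlock {q : ℕ} {κ : Fin q → ℕ} (P1 P2 : ℕ → MatPoly p) (H : ℕ → Mat p)
    (xpt : Fin q → ℂ) (n : ℕ) (a : JIdx q κ) : MatPoly p :=
  ∑ k ∈ Finset.range n,
    cm ((((Nat.factorial (a.2 : ℕ) : ℂ))⁻¹ • evM (xpt a.1) (dM^[(a.2 : ℕ)] (P2 k)))ᵀ * (H k)⁻¹)
      * P1 k

/-- The `Np×Np` matrix of pairings `⟨𝒥^{[0,1]}_{K_{n-1}}(x), (β)_x⟩`. -/
noncomputable def PairM {q : ℕ} {κ : Fin q → ℕ} (β : JIdx q κ → MatPoly p → Mat p)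
    (P1 P2 : ℕ → MatPoly p) (H : ℕ → Mat p) (xpt : Fin q → ℂ) (n : ℕ) :
    Matrix (JIdx q κ × Fin p) (JIdx q κ × Fin p) ℂ :=
  Matrix.of fun a b => (β b.1 (KBlock P1 P2 H xpt n a.1)) a.2 b.2

/-- The `p×Np` row of pairings `⟨P(x), (β)_x⟩`. -/
noncomputable def RowB {q : ℕ} {κ : Fin q → ℕ} (β : JIdx q κ → MatPoly p → Mat p)
    (P : MatPoly p) : Matrix (Fin p) (JIdx q κ × Fin p) ℂ :=
  Matrix.of fun s b => (β b.1 P) s b.2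

/-- The `p×Np` spectral jet `𝒥_f` of a matrix polynomial at the points `xpt j`,
with multiplicities `κ j`. -/
noncomputable def JetRow {q : ℕ} (κ : Fin q → ℕ) (xpt : Fin q → ℂ) (f : MatPoly p) :
    Matrix (Fin p) (JIdx q κ × Fin p) ℂ :=
  Matrix.of fun s a =>
    ((Nat.factorial (a.1.2 : ℕ) : ℂ)⁻¹ • evM (xpt a.1.1) (dM^[(a.1.2 : ℕ)] f)) s a.2

/-- The `Np×p` jet `𝒥^{[0,1]}_{K_{n-1}}(x)` as a matrix with polynomial entries. -/
noncomputable def Jet01 {q : ℕ} (κ : Fin q → ℕ) (P1 P2 : ℕ → MatPoly p) (H : ℕ → Mat p)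
    (xpt : Fin q → ℂ) (n : ℕ) : Matrix (JIdx q κ × Fin p) (Fin p) (Polynomial ℂ) :=
  Matrix.of fun a t => (KBlock (κ := κ) P1 P2 H xpt n a.1) a.2 t

end Paper

namespace Paper

noncomputable def Wpol {q : ℕ} (κ : Fin q → ℕ) (xpt : Fin q → ℂ) : Polynomial ℂ :=
  ∏ j : Fin q, (Polynomial.X - Polynomial.C (xpt j)) ^ (κ j)

noncomputable def Wmat (p : ℕ) {q : ℕ} (κ : Fin q → ℕ) (xpt : Fin q → ℂ) : MatPoly p :=
  Matrix.diagonal fun _ => Wpol κ xpt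

end Paper

/-!
If `Y (I + ⟨𝒥^{[0,1]}_{K_{n-1}}, β⟩) = 0` for a `p × Np` matrix `Y`, the polynomial
`Q = Y 𝒥^{[0,1]}_{K_{n-1}}` has degree `< n` and `⟨Q, β⟩ = -Y`. Since the kernel reproduces jets
of polynomials of degree `< n`, for every such `R`
`û(Q, R) = u(Q, R) + ⟨Q, β⟩ 𝒥_Rᵀ = Y 𝒥_Rᵀ - Y 𝒥_Rᵀ = 0`,
so quasidefiniteness of `û` forces `Q = 0`, and then `Y = -⟨Q, β⟩ = 0`.
-/

namespace Paper

variable {p : ℕ}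

section Coefficients

lemma coeffM_sub (P Q : MatPoly p) (k : ℕ) : coeffM (P - Q) k = coeffM P k - coeffM Q k := by
  ext i j; simp [coeffM]

lemma coeffM_sum {ι : Type*} (s : Finset ι) (f : ι → MatPoly p) (k : ℕ) :
    coeffM (∑ i ∈ s, f i) k = ∑ i ∈ s, coeffM (f i) k := by
  ext i j; simp [coeffM, Matrix.sum_apply, finsetSum_coeff]

lemma coeffM_cm_mul (A : Mat p) (P : MatPoly p) (k : ℕ) :
    coeffM (cm A * P) k = A * coeffM P k := by
  ext i j; simp [coeffM, cm, Matrix.mul_apply, finsetSum_coeff]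

lemma eq_zero_of_coeffM_eq_zero {P : MatPoly p} (h : ∀ k, coeffM P k = 0) : P = 0 :=
  Matrix.ext fun i j => Polynomial.ext fun k => congrFun (congrFun (h k) i) j

def DegLt (P : MatPoly p) (n : ℕ) : Prop := ∀ k, n ≤ k → coeffM P k = 0

lemma DegLt.mono {P : MatPoly p} {n n' : ℕ} (h : DegLt P n) (hn : n ≤ n') : DegLt P n' :=
  fun k hk => h k (hn.trans hk)

lemma MonicDeg.degLt {P : MatPoly p} {n : ℕ} (h : MonicDeg P n) : DegLt P (n + 1) :=
  fun k hk => h.2 k hk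

lemma degLt_sum_cm_mul {ι : Type*} (s : Finset ι) (c : ι → Mat p) {P : ι → MatPoly p} {n : ℕ}
    (hP : ∀ i ∈ s, DegLt (P i) n) : DegLt (∑ i ∈ s, cm (c i) * P i) n := by
  intro k hk
  rw [coeffM_sum]
  exact sum_eq_zero fun i hi => by rw [coeffM_cm_mul, hP i hi k hk, mul_zero]

lemma exists_eq_sum_cm_mul_of_degLt {B : ℕ → MatPoly p} (hB : ∀ k, MonicDeg (B k) k) :
    ∀ {n : ℕ} {P : MatPoly p}, DegLt P n → ∃ c : ℕ → Mat p, P = ∑ k ∈ range n, cm (c k) * B k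
  | 0, P, hP => ⟨0, by simpa using eq_zero_of_coeffM_eq_zero fun k => hP k (Nat.zero_le k)⟩
  | n + 1, P, hP => by
    have hdeg : DegLt (P - cm (coeffM P n) * B n) n := by
      intro k hk
      rw [coeffM_sub, coeffM_cm_mul]
      rcases hk.eq_or_lt with rfl | hlt
      · rw [(hB n).1, mul_one, sub_self]
      · rw [(hB n).2 k hlt, hP k hlt, mul_zero, sub_zero]
    obtain ⟨c, hc⟩ := exists_eq_sum_cm_mul_of_degLt hB hdeg
    refine ⟨Function.update c n (coeffM P n), ?_⟩
    rw [sum_range_succ, Function.update_self,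
      sum_congr rfl fun k hk => by rw [Function.update_of_ne (mem_range.1 hk).ne], ← hc,
      sub_add_cancel]

end Coefficients

section LeftLinear

def IsLeftLinear (T : MatPoly p → Mat p) : Prop :=
  ∀ (A : Mat p) (P Q : MatPoly p), T (cm A * P + Q) = A * T P + T Q

variable {T : MatPoly p → Mat p}

lemma IsLeftLinear.map_zero (hT : IsLeftLinear T) : T 0 = 0 := by
  simpa using hT 1 0 0

lemma IsLeftLinear.map_sum (hT : IsLeftLinear T) {ι : Type*} (s : Finset ι) (c : ι → Mat p)
    (P : ι → MatPoly p) : T (∑ i ∈ s, cm (c i) * P i) = ∑ i ∈ s, c i * T (P i) := by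
  classical
  induction s using Finset.induction with
  | empty => simpa using hT.map_zero
  | insert i s hi ih => rw [sum_insert hi, sum_insert hi, hT, ih]

variable {S : MatPoly p → MatPoly p → Mat p}

lemma IsSesq.isLeftLinear_left (hS : IsSesq S) (R : MatPoly p) : IsLeftLinear (S · R) :=
  fun A P Q => hS.1 A P Q R

lemma IsSesq.isLeftLinear_transpose_right (hS : IsSesq S) (P : MatPoly p) :
    IsLeftLinear fun Q => (S P Q)ᵀ :=
  fun A Q R => by dsimp only; rw [hS.2, transpose_add, transpose_mul, transpose_transpose]

end LeftLinear

section Jets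

lemma iterate_dM_apply (m : ℕ) (P : MatPoly p) (i j : Fin p) :
    (dM^[m] P) i j = derivative^[m] (P i j) := by
  induction m generalizing P with
  | zero => rfl
  | succ m ih => rw [Function.iterate_succ_apply, ih, Function.iterate_succ_apply]; rfl

lemma evM_iterate_dM_transpose (z : ℂ) (m : ℕ) (P : MatPoly p) :
    evM z (dM^[m] Pᵀ) = (evM z (dM^[m] P))ᵀ := by
  ext i j; simp [evM, iterate_dM_apply]

noncomputable def jetF (z : ℂ) (m : ℕ) (P : MatPoly p) : Mat p :=
  (m.factorial : ℂ)⁻¹ • evM z (dM^[m] P)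

lemma isLeftLinear_jetF (z : ℂ) (m : ℕ) : IsLeftLinear (jetF (p := p) z m) := by
  intro A P Q
  ext i j
  simp [jetF, evM, iterate_dM_apply, cm, Matrix.mul_apply, iterate_map_add,
    iterate_derivative_sum, eval_finsetSum]
  rw [mul_add, mul_sum]
  congr 1
  exact sum_congr rfl fun _ _ => mul_left_comm _ _ _

end Jets

section Biorthogonal

variable {S : MatPoly p → MatPoly p → Mat p} {B1 B2 : ℕ → MatPoly p} {G : ℕ → Mat p}

lemma IsSesq.apply_sum_cm_mul_of_biorth (hS : IsSesq S)
    (hbio : ∀ k l, S (B1 k) (B2 l) = if k = l then G k else 0) (c : ℕ → Mat p) {n l : ℕ}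
    (hl : l < n) : S (∑ k ∈ range n, cm (c k) * B1 k) (B2 l) = c l * G l := by
  rw [(hS.isLeftLinear_left _).map_sum]
  simp [hbio, hl]

lemma IsSesq.eq_zero_of_degLt_of_biorth (hS : IsSesq S) (hB1 : ∀ k, MonicDeg (B1 k) k)
    (hG : ∀ k, IsUnit (G k)) (hbio : ∀ k l, S (B1 k) (B2 l) = if k = l then G k else 0)
    {n : ℕ} {Q : MatPoly p} (hQ : DegLt Q n) (horth : ∀ l < n, S Q (B2 l) = 0) : Q = 0 := by
  obtain ⟨c, rfl⟩ := exists_eq_sum_cm_mul_of_degLt hB1 hQ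
  refine sum_eq_zero fun l hl => ?_
  have hcl : c l = 0 := (hG l).mul_left_eq_zero.1 <|
    (hS.apply_sum_cm_mul_of_biorth hbio c (mem_range.1 hl)).symm.trans (horth l (mem_range.1 hl))
  simp [hcl, cm]

/-- The Christoffel–Darboux kernel `K_{n-1}(x, y)` with the functional `T` applied in `y`. -/
noncomputable def cdKernel (B1 B2 : ℕ → MatPoly p) (G : ℕ → Mat p) (n : ℕ)
    (T : MatPoly p → Mat p) : MatPoly p :=
  ∑ k ∈ range n, cm ((T (B2 k))ᵀ * (G k)⁻¹) * B1 k

lemma IsSesq.apply_cdKernel (hS : IsSesq S) (hB2 : ∀ k, MonicDeg (B2 k) k)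
    (hG : ∀ k, IsUnit (G k)) (hbio : ∀ k l, S (B1 k) (B2 l) = if k = l then G k else 0)
    {T : MatPoly p → Mat p} (hT : IsLeftLinear T) {n : ℕ} {R : MatPoly p} (hR : DegLt R n) :
    S (cdKernel B1 B2 G n T) R = (T R)ᵀ := by
  have hbasis : ∀ l ∈ range n, S (cdKernel B1 B2 G n T) (B2 l) = (T (B2 l))ᵀ := fun l hl => by
    rw [cdKernel, hS.apply_sum_cm_mul_of_biorth hbio _ (mem_range.1 hl), mul_assoc,
      nonsing_inv_mul _ ((isUnit_iff_isUnit_det _).1 (hG l)), mul_one]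
  obtain ⟨c, rfl⟩ := exists_eq_sum_cm_mul_of_degLt hB2 hR
  apply transpose_injective
  have hsum := (hS.isLeftLinear_transpose_right (cdKernel B1 B2 G n T)).map_sum (range n) c B2
  rw [hsum, transpose_transpose, hT.map_sum]
  exact sum_congr rfl fun l hl => by rw [hbasis l hl, transpose_transpose]

lemma degLt_cdKernel (B1 B2 : ℕ → MatPoly p) (hB1 : ∀ k, MonicDeg (B1 k) k) (G : ℕ → Mat p)
    (n : ℕ) (T : MatPoly p → Mat p) : DegLt (cdKernel B1 B2 G n T) n :=
  degLt_sum_cm_mul _ _ fun k hk => (hB1 k).degLt.mono (mem_range.1 hk)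

end Biorthogonal

lemma kBlock_eq_cdKernel {q : ℕ} {κ : Fin q → ℕ} (P1 P2 : ℕ → MatPoly p) (H : ℕ → Mat p)
    (xpt : Fin q → ℂ) (n : ℕ) (a : JIdx q κ) :
    KBlock P1 P2 H xpt n a = cdKernel P1 P2 H n (jetF (xpt a.1) a.2) := rfl

section Blocks

def colBlock {m ι n α : Type*} (Y : Matrix m (ι × n) α) (i : ι) : Matrix m n α :=
  Y.submatrix id (Prod.mk i)

lemma mul_transpose_eq_sum_colBlock {l m ι n α : Type*} [Fintype ι] [Fintype n]
    [NonUnitalNonAssocSemiring α] (Y : Matrix m (ι × n) α) (Z : Matrix l (ι × n) α) :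
    Y * Zᵀ = ∑ i, colBlock Y i * (colBlock Z i)ᵀ := by
  ext s t
  simp [colBlock, mul_apply, Matrix.sum_apply, Fintype.sum_prod_type]

variable {q : ℕ} {κ : Fin q → ℕ}

lemma colBlock_rowB (β : JIdx q κ → MatPoly p → Mat p) (P : MatPoly p) (a : JIdx q κ) :
    colBlock (RowB β P) a = β a P := rfl

lemma colBlock_jetRow (xpt : Fin q → ℂ) (P : MatPoly p) (a : JIdx q κ) :
    colBlock (JetRow κ xpt P) a = jetF (xpt a.1) a.2 P := rfl

lemma mul_pairM {β : JIdx q κ → MatPoly p → Mat p} (hβ : ∀ a, IsLeftLinear (β a))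
    (P1 P2 : ℕ → MatPoly p) (H : ℕ → Mat p) (xpt : Fin q → ℂ) (n : ℕ)
    (Y : Matrix (Fin p) (JIdx q κ × Fin p) ℂ) :
    Y * PairM β P1 P2 H xpt n = RowB β (∑ a, cm (colBlock Y a) * KBlock P1 P2 H xpt n a) := by
  ext s ⟨b, t⟩
  simp [RowB, (hβ b).map_sum, PairM, mul_apply, Matrix.sum_apply, Fintype.sum_prod_type, colBlock]

end Blocks

section Uvarov

variable {q : ℕ} {κ : Fin q → ℕ} {xpt : Fin q → ℂ} {u uh : MatPoly p → MatPoly p → Mat p}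
  {β : JIdx q κ → MatPoly p → Mat p}

lemma eq_add_rowB_mul_transpose_jetRow
    (hv : ∀ P Q : MatPoly p, uh P Q = u P Q + ∑ a : JIdx q κ,
      (Nat.factorial (a.2 : ℕ) : ℂ)⁻¹ • (β a P * evM (xpt a.1) (dM^[(a.2 : ℕ)] Qᵀ)))
    (P Q : MatPoly p) : uh P Q = u P Q + RowB β P * (JetRow κ xpt Q)ᵀ := by
  rw [hv, mul_transpose_eq_sum_colBlock]
  congr 1
  refine sum_congr rfl fun a _ => ?_
  rw [colBlock_rowB, colBlock_jetRow, jetF, evM_iterate_dM_transpose, transpose_smul,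
    mul_smul_comm]

theorem eq_zero_of_mul_one_add_pairM_eq_zero (hu : IsSesq u) (huh : IsSesq uh)
    (hβ : ∀ a, IsLeftLinear (β a))
    (hv : ∀ P Q, uh P Q = u P Q + RowB β P * (JetRow κ xpt Q)ᵀ)
    {P1 P2 hP1 hP2 : ℕ → MatPoly p} {H Hh : ℕ → Mat p}
    (hmon1 : ∀ k, MonicDeg (P1 k) k) (hmon2 : ∀ k, MonicDeg (P2 k) k)
    (hmon1h : ∀ k, MonicDeg (hP1 k) k) (hmon2h : ∀ k, MonicDeg (hP2 k) k)
    (hH : ∀ k, IsUnit (H k)) (hHh : ∀ k, IsUnit (Hh k))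
    (hbio : ∀ k l, u (P1 k) (P2 l) = if k = l then H k else 0)
    (hbioh : ∀ k l, uh (hP1 k) (hP2 l) = if k = l then Hh k else 0)
    {n : ℕ} {Y : Matrix (Fin p) (JIdx q κ × Fin p) ℂ}
    (hY : Y * (1 + PairM β P1 P2 H xpt n) = 0) : Y = 0 := by
  set Q := ∑ a, cm (colBlock Y a) * KBlock P1 P2 H xpt n a
  have hβQ : RowB β Q = -Y := by
    rw [Matrix.mul_add, Matrix.mul_one, mul_pairM hβ] at hY
    exact eq_neg_of_add_eq_zero_right hY
  have hQdeg : DegLt Q n :=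
    degLt_sum_cm_mul _ _ fun a _ => degLt_cdKernel P1 P2 hmon1 H n (jetF (xpt a.1) a.2)
  have hrep : ∀ R, DegLt R n → u Q R = Y * (JetRow κ xpt R)ᵀ := fun R hR => by
    rw [(hu.isLeftLinear_left R).map_sum, mul_transpose_eq_sum_colBlock]
    refine sum_congr rfl fun a _ => ?_
    rw [kBlock_eq_cdKernel, hu.apply_cdKernel hmon2 hH hbio (isLeftLinear_jetF _ _) hR,
      colBlock_jetRow]
  have horth : ∀ l < n, uh Q (hP2 l) = 0 := fun l hl => by
    rw [hv, hrep _ ((hmon2h l).degLt.mono hl), hβQ, Matrix.neg_mul, add_neg_cancel]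
  have hQ : Q = 0 := huh.eq_zero_of_degLt_of_biorth hmon1h hHh hbioh hQdeg horth
  have hβ0 : RowB β 0 = 0 := by
    ext s b
    simp [RowB, (hβ b.1).map_zero]
  rwa [hQ, hβ0, zero_eq_neg] at hβQ

end Uvarov

lemma isUnit_of_forall_mul_eq_zero {ι n K : Type*} [Fintype ι] [Fintype n] [DecidableEq ι]
    [DecidableEq n] [Field K] (M : Matrix (ι × n) (ι × n) K)
    (h : ∀ Y : Matrix n (ι × n) K, Y * M = 0 → Y = 0) : IsUnit M := by
  rw [isUnit_iff_isUnit_det, isUnit_iff_ne_zero, ne_eq, ← exists_vecMul_eq_zero_iff.not]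
  rintro ⟨y, hy0, hy⟩
  have hY := h (replicateRow n y) (by rw [← replicateRow_vecMul, hy, replicateRow_zero])
  exact hy0 (funext fun ⟨i, t⟩ => congrFun (congrFun hY t) (i, t))

end Paper

open Paper in
theorem statement16_general (p q : ℕ) (κ : Fin q → ℕ) (xpt : Fin q → ℂ)
    (u uh : MatPoly p → MatPoly p → Mat p) (hu : IsSesq u) (huh : IsSesq uh)
    (β : JIdx q κ → MatPoly p → Mat p)
    (hβ : ∀ a (A : Mat p) (P Q : MatPoly p), β a (cm A * P + Q) = A * β a P + β a Q)
    (hv : ∀ P Q : MatPoly p, uh P Q = u P Q + ∑ a : JIdx q κ,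
        (Nat.factorial (a.2 : ℕ) : ℂ)⁻¹ • (β a P * evM (xpt a.1) (dM^[(a.2 : ℕ)] Qᵀ)))
    (P1 P2 hP1 hP2 : ℕ → MatPoly p) (H Hh : ℕ → Mat p)
    (hmon1 : ∀ k, MonicDeg (P1 k) k) (hmon2 : ∀ k, MonicDeg (P2 k) k)
    (hmon1h : ∀ k, MonicDeg (hP1 k) k) (hmon2h : ∀ k, MonicDeg (hP2 k) k)
    (hH : ∀ k, IsUnit (H k)) (hHh : ∀ k, IsUnit (Hh k))
    (hbio : ∀ k l, u (P1 k) (P2 l) = if k = l then H k else 0)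
    (hbioh : ∀ k l, uh (hP1 k) (hP2 l) = if k = l then Hh k else 0) :
    ∀ m : ℕ, IsUnit ((1 : Matrix (JIdx q κ × Fin p) (JIdx q κ × Fin p) ℂ)
        + PairM β P1 P2 H xpt m) := fun _ =>
  isUnit_of_forall_mul_eq_zero _ fun _ hY =>
    eq_zero_of_mul_one_add_pairM_eq_zero hu huh hβ (eq_add_rowB_mul_transpose_jetRow hv)
      hmon1 hmon2 hmon1h hmon2h hH hHh hbio hbioh hY

open Paper in
/-- main nonsingularity theorem: in the Uvarov setting with `u` and
`û = u + v` both quasidefinite and with linearly independent functionals `β` (given through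
their right pairing `β` and left pairing `βL`), if either `(Ker^R_β)^{⊥_u^R} = {0}` or
`𝕀^{⊥_u^L} = {0}`, then for every `n` the matrix
`I_{Np} + ⟨𝒥^{[0,1]}_{K_{n−1}}(x),(β)_x⟩` is invertible. -/
theorem statement16 (p q : ℕ) (κ : Fin q → ℕ) (hκ : ∀ j, 0 < κ j) (xpt : Fin q → ℂ)
    (hx : Function.Injective xpt)
    (u uh : MatPoly p → MatPoly p → Mat p) (hu : IsSesq u) (huh : IsSesq uh)
    (β : JIdx q κ → MatPoly p → Mat p)
    (hβ : ∀ a (A : Mat p) (P Q : MatPoly p), β a (cm A * P + Q) = A * β a P + β a Q)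
    (hv : ∀ P Q : MatPoly p, uh P Q = u P Q + ∑ a : JIdx q κ,
        (Nat.factorial (a.2 : ℕ) : ℂ)⁻¹ • (β a P * evM (xpt a.1) (dM^[(a.2 : ℕ)] Qᵀ)))
    (P1 P2 hP1 hP2 : ℕ → MatPoly p) (H Hh : ℕ → Mat p)
    (hmon1 : ∀ k, MonicDeg (P1 k) k) (hmon2 : ∀ k, MonicDeg (P2 k) k)
    (hmon1h : ∀ k, MonicDeg (hP1 k) k) (hmon2h : ∀ k, MonicDeg (hP2 k) k)
    (hH : ∀ k, IsUnit (H k)) (hHh : ∀ k, IsUnit (Hh k))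
    (hbio : ∀ k l, u (P1 k) (P2 l) = if k = l then H k else 0)
    (hbioh : ∀ k l, uh (hP1 k) (hP2 l) = if k = l then Hh k else 0)
    (n : ℕ)
    (βL : JIdx q κ → MatPoly p → Mat p)
    (hβL : ∀ a (A : Mat p) (P Q : MatPoly p), βL a (P * cm A + Q) = βL a P * A + βL a Q)
    (hβcomp : ∀ a k, βL a (monoM p k) = β a (monoM p k))
    (hindR : ∀ Xc : JIdx q κ → Mat p,
      (∀ k, ∑ a : JIdx q κ, β a (monoM p k) * Xc a = 0) → ∀ a, Xc a = 0)
    (hindL : ∀ Yc : JIdx q κ → Mat p,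
      (∀ k, ∑ a : JIdx q κ, Yc a * β a (monoM p k) = 0) → ∀ a, Yc a = 0)
    (hcond :
      (∀ Q : MatPoly p, (∀ P : MatPoly p, (∀ a, βL a P = 0) → u P Q = 0) → Q = 0) ∨
      (∀ Q : MatPoly p, (∀ R : MatPoly p, u Q (Wmat p κ xpt * R) = 0) → Q = 0)) :
    ∀ m : ℕ, IsUnit ((1 : Matrix (JIdx q κ × Fin p) (JIdx q κ × Fin p) ℂ)
        + PairM β P1 P2 H xpt m) :=
  statement16_general p q κ xpt u uh hu huh β hβ hv P1 P2 hP1 hP2 H Hh hmon1 hmon2 hmon1h hmon2h hH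
    hHh hbio hbioh
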